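/- arXiv:2001.07741 — 5 statements merged into one kernel-verified Lean document; each statement's English description precedes it below -/
import Mathlib

section
/- Suppose for every finite demand-pair set P with |P| ≤ p* there exists a subgraph satisfying all pairs of P with at most A edges, and for every P with |P| ≥ p* there exists a subgraph with at most B·|P|^c edges (c > 0 a fixed constant) satisfying at least an α-fraction (0 < α ≤ 1) of the pairs of P. Then for every finite P there exists a subgraph satisfying all pairs of P with at most A + (B/(1-(1-α)^c))·|P|^c edges. -/
/-!
Peel off satisfied pairs greedily: on a demand set larger than `p*`, the slack sparsifier satisfies
an `α`-fraction `P'` of the pairs at cost `B·|P|^c`, and one recurses on the remaining `≤ (1-α)|P|`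
pairs, finishing with a complete sparsifier of cost `A` once at most `p*` pairs remain. The union of
the pieces satisfies everything by monotonicity, and the costs sum to at most the geometric series
`B·|P|^c · ∑ₖ ((1-α)^c)^k = B/(1-(1-α)^c) · |P|^c`; in the induction this is the inequality
`B x + K r x ≤ K x` for `K = B/(1-r)`, `r = (1-α)^c`.
-/

open Finset

lemma one_sub_rpow_lt_one {α c : ℝ} (hα0 : 0 < α) (hα1 : α ≤ 1) (hc : 0 < c) :
    (1 - α) ^ c < 1 := by
  rcases (sub_nonneg.2 hα1).eq_or_lt with h | h
  · rw [← h, Real.zero_rpow hc.ne']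
    exact one_pos
  · exact Real.rpow_lt_one h.le (by linarith) hc

lemma mul_add_div_one_sub_mul_le {B r x y : ℝ} (hB : 0 ≤ B) (hr : r < 1) (hy : y ≤ r * x) :
    B * x + B / (1 - r) * y ≤ B / (1 - r) * x := by
  have hK : 0 ≤ B / (1 - r) := div_nonneg hB (sub_pos.2 hr).le
  calc B * x + B / (1 - r) * y
      ≤ B / (1 - r) * (1 - r) * x + B / (1 - r) * (r * x) := by
        rw [div_mul_cancel₀ B (sub_pos.2 hr).ne']
        gcongr
    _ = B / (1 - r) * x := by ring

lemma card_sdiff_le_one_sub_mul {α : Type*} [DecidableEq α] {s t : Finset α} {a : ℝ}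
    (hts : t ⊆ s) (ht : a * s.card ≤ t.card) :
    ((s \ t).card : ℝ) ≤ (1 - a) * s.card := by
  rw [card_sdiff_of_subset hts, Nat.cast_sub (card_le_card hts)]
  linarith

lemma forall_sat_union_of_sat_sdiff {E Q : Type*} [DecidableEq E] [DecidableEq Q]
    {sat : Finset E → Q → Prop}
    (hmono : ∀ (H H' : Finset E) (q : Q), H ⊆ H' → sat H q → sat H' q)
    {P P' : Finset Q} {H₁ H₂ : Finset E}
    (h₁ : ∀ q ∈ P', sat H₁ q) (h₂ : ∀ q ∈ P \ P', sat H₂ q) :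
    ∀ q ∈ P, sat (H₁ ∪ H₂) q := by
  intro q hq
  by_cases hq' : q ∈ P'
  · exact hmono _ _ q subset_union_left (h₁ q hq')
  · exact hmono _ _ q subset_union_right (h₂ q (mem_sdiff.2 ⟨hq, hq'⟩))

theorem stmt1_general {E Q : Type}
    (sat : Finset E → Q → Prop)
    (hmono : ∀ (H H' : Finset E) (q : Q), H ⊆ H' → sat H q → sat H' q)
    (α c A B : ℝ) (hα0 : 0 < α) (hα1 : α ≤ 1) (hc : 0 < c) (hB : 0 ≤ B)
    (pstar : ℕ)
    (hcomplete : ∀ P : Finset Q, P.card ≤ pstar →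
      ∃ H : Finset E, (H.card : ℝ) ≤ A ∧ ∀ q ∈ P, sat H q)
    (hslack : ∀ P : Finset Q, pstar ≤ P.card →
      ∃ H : Finset E, (H.card : ℝ) ≤ B * (P.card : ℝ) ^ c ∧
        ∃ P' ⊆ P, α * (P.card : ℝ) ≤ (P'.card : ℝ) ∧ ∀ q ∈ P', sat H q) :
    ∀ P : Finset Q, ∃ H : Finset E,
      (H.card : ℝ) ≤ A + (B / (1 - (1 - α) ^ c)) * (P.card : ℝ) ^ c ∧
      ∀ q ∈ P, sat H q := by
  classical
  have hr := one_sub_rpow_lt_one hα0 hα1 hc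
  have hK : 0 ≤ B / (1 - (1 - α) ^ c) := div_nonneg hB (sub_pos.2 hr).le
  intro P
  induction P using Finset.strongInduction with
  | H P ih =>
  by_cases hsmall : P.card ≤ pstar
  · obtain ⟨H, hH, hsat⟩ := hcomplete P hsmall
    exact ⟨H, hH.trans (le_add_of_nonneg_right (by positivity)), hsat⟩
  obtain ⟨H₁, hH₁, P', hP'P, hP'card, hsat₁⟩ := hslack P (le_of_not_ge hsmall)
  have hP' : P'.Nonempty := card_pos.1 <| Nat.cast_pos.1 <|
    (mul_pos hα0 (Nat.cast_pos.2 (by omega))).trans_le hP'card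
  obtain ⟨H₂, hH₂, hsat₂⟩ := ih (P \ P') (sdiff_ssubset hP'P hP')
  have hrest : ((P \ P').card : ℝ) ^ c ≤ (1 - α) ^ c * (P.card : ℝ) ^ c := by
    rw [← Real.mul_rpow (by linarith) (Nat.cast_nonneg _)]
    exact Real.rpow_le_rpow (Nat.cast_nonneg _) (card_sdiff_le_one_sub_mul hP'P hP'card) hc.le
  refine ⟨H₁ ∪ H₂, ?_, forall_sat_union_of_sat_sdiff hmono hsat₁ hsat₂⟩
  calc ((H₁ ∪ H₂).card : ℝ) ≤ H₁.card + H₂.card := by exact_mod_cast card_union_le _ _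
    _ ≤ B * (P.card : ℝ) ^ c + (A + B / (1 - (1 - α) ^ c) * ((P \ P').card : ℝ) ^ c) :=
      add_le_add hH₁ hH₂
    _ ≤ A + B / (1 - (1 - α) ^ c) * (P.card : ℝ) ^ c := by
      linarith [mul_add_div_one_sub_mul_le hB hr hrest]

/-- Abstract form of the Main Lemma. `sat H q` means the edge set `H` satisfies the demand
pair `q` (e.g. `dist_H ≤ dist_G + k`); it is monotone under adding edges.  If every demand
set of size `≤ p*` admits a complete sparsifier on `≤ A` edges, and every demand set of
size `≥ p*` admits a sparsifier on `≤ B·|P|^c` edges satisfying an `α`-fraction of pairs,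
then every demand set `P` admits a complete sparsifier on
`≤ A + (B/(1-(1-α)^c))·|P|^c` edges. -/
theorem stmt1 {E Q : Type} [DecidableEq E] [DecidableEq Q]
    (sat : Finset E → Q → Prop)
    (hmono : ∀ (H H' : Finset E) (q : Q), H ⊆ H' → sat H q → sat H' q)
    (α c A B : ℝ) (hα0 : 0 < α) (hα1 : α ≤ 1) (hc : 0 < c) (hB : 0 ≤ B)
    (pstar : ℕ)
    (hcomplete : ∀ P : Finset Q, P.card ≤ pstar →
      ∃ H : Finset E, (H.card : ℝ) ≤ A ∧ ∀ q ∈ P, sat H q)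
    (hslack : ∀ P : Finset Q, pstar ≤ P.card →
      ∃ H : Finset E, (H.card : ℝ) ≤ B * (P.card : ℝ) ^ c ∧
        ∃ P' ⊆ P, α * (P.card : ℝ) ≤ (P'.card : ℝ) ∧ ∀ q ∈ P', sat H q) :
    ∀ P : Finset Q, ∃ H : Finset E,
      (H.card : ℝ) ≤ A + (B / (1 - (1 - α) ^ c)) * (P.card : ℝ) ^ c ∧
      ∀ q ∈ P, sat H q :=
  stmt1_general sat hmono α c A B hα0 hα1 hc hB pstar hcomplete hslack
end

section
/- For every n-node directed weighted graph G and set P of p demand pairs, there exists a subgraph H with O(n·p^{1/2}) edges and a subset P' ⊆ P with |P'| ≥ (1 - 1/e)·|P| (in expectation) such that dist_H(s,t) = dist_G(s,t) for all (s,t) ∈ P'. Concretely, with ℓ = n/p^{1/2}, one can achieve |E(H)| ≤ p·ℓ + 2n·|R| where R is a random node sample of rate 1/ℓ, yielding expected size at most p·ℓ + 2n²/ℓ = 3n·p^{1/2}. -/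
open scoped ENNReal

/-- `DWalk adj s l t`: `s :: l` is a walk from `s` to `t` in the directed graph with
adjacency relation `adj`; the walk has `l.length` edges. -/
def DWalk {V : Type} (adj : V → V → Prop) : V → List V → V → Prop
  | s, [], t => s = t
  | s, u :: l, t => adj s u ∧ DWalk adj u l t

/-- Total weight of the walk `u :: l` under edge weights `w`. -/
noncomputable def wWeight {V : Type} (w : V → V → ℝ≥0∞) : V → List V → ℝ≥0∞
  | _, [] => 0
  | u, v :: l => w u v + wWeight w v l

/-- Shortest-path distance from `s` to `t` (∞ if unreachable). -/
noncomputable def ddist {V : Type} (adj : V → V → Prop) (w : V → V → ℝ≥0∞) (s t : V) : ℝ≥0∞ :=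
  sInf {x | ∃ l, DWalk adj s l t ∧ wWeight w s l = x}

/-- Reachability in a directed graph. -/
def DReach {V : Type} (adj : V → V → Prop) (s t : V) : Prop := ∃ l, DWalk adj s l t
open MeasureTheory in
/-- The law of sampling each node of `V` independently with probability `q`. -/
noncomputable def bernoulliSample (V : Type) [Fintype V] (q : ℝ≥0∞) (hq : q ≤ 1) :
    Measure (V → Bool) :=
  Measure.pi fun _ => (PMF.bernoulli q.toNNReal (by simpa using ENNReal.toNNReal_mono ENNReal.one_ne_top hq)).toMeasure

/-! Fix for every pair a shortest walk without repeated vertices and put `ℓ = ⌊n/√p⌋`. The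
subgraph `H(R)` consists of the walks of the pairs with at most `ℓ` edges (at most `p·ℓ` edges
in total) and of a shortest-path in-tree and out-tree (at most `n` edges each) rooted at every
sampled vertex. A longer pair is preserved as soon as one of the more than `ℓ + 1` vertices of
its walk is sampled, because the two trees rooted there concatenate to a shortest walk; this
fails with probability at most `(1 - √p/n)^(ℓ+1) ≤ e⁻¹`. Shortest-path trees exist because the
last edge of a shortest walk with fewest edges comes from a vertex whose shortest walks need
fewer edges. -/

section Walks

variable {V : Type} {adj adj' : V → V → Prop} {w : V → V → ℝ≥0∞} {s t u v : V}
  {l l₁ l₂ : List V}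

theorem ddist_le_wWeight (h : DWalk adj s l t) : ddist adj w s t ≤ wWeight w s l :=
  sInf_le ⟨l, h, rfl⟩

theorem ddist_self : ddist adj w s s = 0 :=
  le_antisymm (ddist_le_wWeight (l := []) rfl) zero_le

theorem ddist_le_of_adj (h : adj s t) : ddist adj w s t ≤ w s t := by
  simpa [wWeight] using ddist_le_wWeight (w := w) (l := [t]) ⟨h, rfl⟩

theorem DWalk.mono (hadj : ∀ a b, adj a b → adj' a b) (h : DWalk adj s l t) :
    DWalk adj' s l t := by
  induction l generalizing s with
  | nil => exact h
  | cons u l ih => exact ⟨hadj _ _ h.1, ih h.2⟩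

theorem ddist_anti (hadj : ∀ a b, adj a b → adj' a b) :
    ddist adj' w s t ≤ ddist adj w s t :=
  sInf_le_sInf fun _ ⟨l, hl, hw⟩ => ⟨l, hl.mono hadj, hw⟩

theorem DWalk.append (h₁ : DWalk adj s l₁ u) (h₂ : DWalk adj u l₂ t) :
    DWalk adj s (l₁ ++ l₂) t := by
  induction l₁ generalizing s with
  | nil => cases h₁; exact h₂
  | cons a l ih => exact ⟨h₁.1, ih h₁.2⟩

theorem wWeight_append (h₁ : DWalk adj s l₁ u) :
    wWeight w s (l₁ ++ l₂) = wWeight w s l₁ + wWeight w u l₂ := by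
  induction l₁ generalizing s with
  | nil => cases h₁; simp [wWeight]
  | cons a l ih => simp only [List.cons_append, wWeight, ih h₁.2, add_assoc]

theorem DWalk.concat (h : DWalk adj s l u) (he : adj u t) : DWalk adj s (l ++ [t]) t :=
  h.append ⟨he, rfl⟩

theorem wWeight_concat (h : DWalk adj s l u) :
    wWeight w s (l ++ [t]) = wWeight w s l + w u t := by
  simp [wWeight_append h, wWeight]

theorem DWalk.of_concat (h : DWalk adj s (l ++ [t]) v) :
    v = t ∧ ∃ u, DWalk adj s l u ∧ adj u t := by
  induction l generalizing s with
  | nil => exact ⟨h.2.symm, s, rfl, h.1⟩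
  | cons a l ih =>
    obtain ⟨rfl, u, hu, he⟩ := ih h.2
    exact ⟨rfl, u, ⟨h.1, hu⟩, he⟩

theorem ddist_triangle : ddist adj w s t ≤ ddist adj w s u + ddist adj w u t := by
  simp only [ddist, ENNReal.sInf_add, ENNReal.add_sInf]
  refine le_iInf₂ fun _ ⟨l₂, h₂, hw₂⟩ => le_iInf₂ fun _ ⟨l₁, h₁, hw₁⟩ => ?_
  rw [← hw₁, ← hw₂, ← wWeight_append h₁]
  exact ddist_le_wWeight (h₁.append h₂)

theorem ddist_add_ddist_le_of_mem (h : DWalk adj s l t) (hv : v ∈ s :: l) :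
    ddist adj w s v + ddist adj w v t ≤ wWeight w s l := by
  induction l generalizing s with
  | nil => cases h; simp_all [ddist_self]
  | cons u l ih =>
    rcases List.mem_cons.1 hv with rfl | hv
    · simpa [ddist_self] using ddist_le_wWeight h
    · calc ddist adj w s v + ddist adj w v t
          ≤ w s u + ddist adj w u v + ddist adj w v t := by
            gcongr
            exact ddist_triangle.trans (add_le_add_left (ddist_le_of_adj h.1) _)
        _ ≤ w s u + wWeight w u l := by rw [add_assoc]; gcongr; exact ih h.2 hv

theorem ddist_eq_of_dWalk (hadj : ∀ a b, adj' a b → adj a b) (h : DWalk adj' s l t)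
    (hw : wWeight w s l ≤ ddist adj w s t) : ddist adj' w s t = ddist adj w s t :=
  le_antisymm ((ddist_le_wWeight h).trans hw) (ddist_anti hadj)

theorem ddist_eq_of_eq_top (hadj : ∀ a b, adj' a b → adj a b) (h : ddist adj w s t = ⊤) :
    ddist adj' w s t = ddist adj w s t := by
  rw [h]; exact top_le_iff.1 (h ▸ ddist_anti hadj)

theorem dReach_of_ddist_ne_top (h : ddist adj w s t ≠ ⊤) : DReach adj s t := by
  by_contra hr
  refine h (sInf_eq_top.2 ?_)
  rintro _ ⟨l, hl, -⟩
  exact absurd ⟨l, hl⟩ hr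

theorem DWalk.of_cons_eq_append (h : DWalk adj s l t) (he : s :: l = l₁ ++ v :: l₂) :
    DWalk adj v l₂ t ∧ wWeight w v l₂ ≤ wWeight w s l := by
  induction l₁ generalizing s l with
  | nil => cases he; exact ⟨h, le_rfl⟩
  | cons a l₁ ih =>
    obtain ⟨-, hl⟩ := List.cons_eq_cons.1 he
    cases l with
    | nil => simp at hl
    | cons b l =>
      obtain ⟨h₂, hw⟩ := ih h.2 hl
      exact ⟨h₂, hw.trans le_add_self⟩

theorem DWalk.exists_nodup (h : DWalk adj s l t) :
    ∃ l', DWalk adj s l' t ∧ (s :: l').Nodup ∧ wWeight w s l' ≤ wWeight w s l := by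
  induction l generalizing s with
  | nil => exact ⟨[], h, List.nodup_singleton s, le_rfl⟩
  | cons u l ih =>
    obtain ⟨l', h', hnd, hw⟩ := ih h.2
    have hw' : wWeight w u l' ≤ wWeight w s (u :: l) := hw.trans le_add_self
    by_cases hs : s ∈ u :: l'
    · obtain ⟨l₁, l₂, he⟩ := List.append_of_mem hs
      obtain ⟨h₂, hw₂⟩ := h'.of_cons_eq_append he
      exact ⟨l₂, h₂, hnd.sublist (he ▸ List.sublist_append_right _ _), hw₂.trans hw'⟩
    · exact ⟨u :: l', ⟨h.1, h'⟩, List.nodup_cons.2 ⟨hs, hnd⟩,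
        add_le_add_right hw _⟩

theorem exists_dWalk_nodup_wWeight_eq_ddist [Fintype V] (h : DReach adj s t) :
    ∃ l, DWalk adj s l t ∧ (s :: l).Nodup ∧ wWeight w s l = ddist adj w s t := by
  set N := {l | DWalk adj s l t ∧ (s :: l).Nodup}
  have hN : N.Finite := (List.finite_length_le V (Fintype.card V)).subset fun l hl =>
    (List.nodup_cons.1 hl.2).2.length_le_card
  obtain ⟨l₀, h₀⟩ := h
  obtain ⟨l₁, h₁, hnd₁, -⟩ := h₀.exists_nodup (w := w)
  obtain ⟨l, ⟨hl, hnd⟩, hmin⟩ := Set.exists_min_image N (wWeight w s) hN ⟨l₁, h₁, hnd₁⟩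
  refine ⟨l, hl, hnd, le_antisymm (le_sInf ?_) (ddist_le_wWeight hl)⟩
  rintro _ ⟨l', hl', rfl⟩
  obtain ⟨l'', h'', hnd'', hw''⟩ := hl'.exists_nodup (w := w)
  exact (hmin l'' ⟨h'', hnd''⟩).trans hw''

end Walks

section Trees

open Finset

variable {V : Type} {adj : V → V → Prop} {w : V → V → ℝ≥0∞} {s t r : V} {l : List V}

theorem DWalk.reverse (h : DWalk adj s l t) :
    DWalk (flip adj) t (s :: l).dropLast.reverse s := by
  induction l generalizing s with
  | nil => exact h.symm
  | cons u l ih =>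
    rw [List.dropLast_cons_cons, List.reverse_cons]
    exact (ih h.2).concat h.1

theorem wWeight_reverse (h : DWalk adj s l t) :
    wWeight (flip w) t (s :: l).dropLast.reverse = wWeight w s l := by
  induction l generalizing s with
  | nil => rfl
  | cons u l ih =>
    rw [List.dropLast_cons_cons, List.reverse_cons, wWeight_concat h.2.reverse, ih h.2, add_comm]
    rfl

theorem ddist_flip : ddist (flip adj) (flip w) t s = ddist adj w s t := by
  have key : ∀ {adj : V → V → Prop} {w : V → V → ℝ≥0∞} {s t : V},
      ddist (flip adj) (flip w) t s ≤ ddist adj w s t := fun {_ _ _ _} =>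
    le_sInf fun _ ⟨_, hl, hw⟩ => hw ▸ wWeight_reverse hl ▸ ddist_le_wWeight hl.reverse
  -- `flip (flip adj)` is `adj` by definition, so `key` also gives the reverse inequality.
  exact le_antisymm key key

noncomputable def shortestHops (adj : V → V → Prop) (w : V → V → ℝ≥0∞) (s t : V) : ℕ :=
  sInf {k | ∃ l : List V, DWalk adj s l t ∧ wWeight w s l = ddist adj w s t ∧ l.length = k}

theorem exists_parent [Fintype V] (ht : ddist adj w r t ≠ ⊤) (hr : t ≠ r) :
    ∃ u, adj u t ∧ ddist adj w r u + w u t = ddist adj w r t ∧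
      shortestHops adj w r u < shortestHops adj w r t := by
  have hne : {k | ∃ l : List V, DWalk adj r l t ∧ wWeight w r l = ddist adj w r t ∧
      l.length = k}.Nonempty := by
    obtain ⟨l, hl, -, hw⟩ :=
      exists_dWalk_nodup_wWeight_eq_ddist (w := w) (dReach_of_ddist_ne_top ht)
    exact ⟨_, l, hl, hw, rfl⟩
  obtain ⟨l, hl, hw, hlen⟩ := Nat.sInf_mem hne
  change _ = shortestHops adj w r t at hlen
  obtain ⟨m, t', rfl⟩ := (List.eq_nil_or_concat l).resolve_left (by rintro rfl; exact hr hl.symm)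
  rw [List.concat_eq_append] at hl hw hlen
  obtain ⟨rfl, u, hm, hu⟩ := hl.of_concat
  rw [wWeight_concat hm] at hw
  have hrel : ddist adj w r u + w u t = ddist adj w r t :=
    le_antisymm (hw ▸ by gcongr; exact ddist_le_wWeight hm)
      (ddist_triangle.trans (by gcongr; exact ddist_le_of_adj hu))
  have hm' : wWeight w r m = ddist adj w r u :=
    (ENNReal.add_left_inj (ENNReal.add_ne_top.1 (hw ▸ ht)).2).1 (hw.trans hrel.symm)
  refine ⟨u, hu, hrel, ?_⟩
  calc shortestHops adj w r u ≤ m.length := Nat.sInf_le ⟨m, hm, hm', rfl⟩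
    _ < shortestHops adj w r t := by simp [← hlen]

theorem exists_outTree [Fintype V] (adj : V → V → Prop) (w : V → V → ℝ≥0∞) (r : V) :
    ∃ T : Finset (V × V), (∀ e ∈ T, adj e.1 e.2) ∧ #T ≤ Fintype.card V ∧
      ∀ t, ddist adj w r t ≠ ⊤ →
        ∃ l, DWalk (fun a b => (a, b) ∈ T) r l t ∧ wWeight w r l = ddist adj w r t := by
  classical
  choose par hpar using fun t => (em (ddist adj w r t ≠ ⊤ ∧ t ≠ r)).elim
    (fun h => (exists_parent h.1 h.2).imp fun _ hu (_ : ddist adj w r t ≠ ⊤ ∧ t ≠ r) => hu)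
    (fun h => ⟨t, fun h' => absurd h' h⟩)
  refine ⟨(univ.filter fun t => ddist adj w r t ≠ ⊤ ∧ t ≠ r).image fun t => (par t, t),
    ?_, card_image_le.trans (card_filter_le _ _), fun t ht => ?_⟩
  · simp only [mem_image, mem_filter]
    rintro _ ⟨t, ⟨-, ht⟩, rfl⟩
    exact (hpar t ht).1
  induction hk : shortestHops adj w r t using Nat.strong_induction_on generalizing t with
  | _ k ih =>
    by_cases htr : t = r
    · subst htr
      exact ⟨[], rfl, by simp [wWeight, ddist_self]⟩
    obtain ⟨hu, hrel, hlt⟩ := hpar t ⟨ht, htr⟩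
    obtain ⟨l, hl, hw⟩ :=
      ih _ (hk ▸ hlt) (par t) (ne_top_of_le_ne_top ht (hrel ▸ le_self_add)) rfl
    refine ⟨l ++ [t], hl.concat (mem_image_of_mem _ (by simp [ht, htr])), ?_⟩
    rw [wWeight_concat hl, hw, hrel]

theorem exists_inTree [Fintype V] (adj : V → V → Prop) (w : V → V → ℝ≥0∞) (r : V) :
    ∃ T : Finset (V × V), (∀ e ∈ T, adj e.1 e.2) ∧ #T ≤ Fintype.card V ∧
      ∀ s, ddist adj w s r ≠ ⊤ →
        ∃ l, DWalk (fun a b => (a, b) ∈ T) s l r ∧ wWeight w s l = ddist adj w s r := by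
  classical
  obtain ⟨T, hadj, hcard, hT⟩ := exists_outTree (flip adj) (flip w) r
  refine ⟨T.image Prod.swap, ?_, card_image_le.trans hcard, fun s hs => ?_⟩
  · simp only [mem_image]
    rintro _ ⟨e, he, rfl⟩
    exact hadj e he
  obtain ⟨l, hl, hw⟩ := hT s (by rwa [ddist_flip])
  refine ⟨_, hl.reverse.mono fun a b hab => mem_image_of_mem Prod.swap hab, ?_⟩
  exact (wWeight_reverse (w := flip w) hl).trans (hw.trans ddist_flip)

end Trees

section Preserver

open Finset

variable {V : Type} {adj : V → V → Prop} {w : V → V → ℝ≥0∞} {s t v : V} {l : List V}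

def walkEdges (s : V) (l : List V) : List (V × V) := (s :: l).zip l

theorem length_walkEdges : (walkEdges s l).length = l.length := by
  simp [walkEdges]

theorem DWalk.adj_of_mem_walkEdges (h : DWalk adj s l t) {e : V × V}
    (he : e ∈ walkEdges s l) : adj e.1 e.2 := by
  induction l generalizing s with
  | nil => simp [walkEdges] at he
  | cons u l ih =>
    rcases List.mem_cons.1 he with rfl | he
    · exact h.1
    · exact ih h.2 he

theorem DWalk.restrict_walkEdges (h : DWalk adj s l t) :
    DWalk (fun a b => (a, b) ∈ walkEdges s l) s l t := by
  induction l generalizing s with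
  | nil => exact h
  | cons u l ih =>
    exact ⟨List.mem_cons_self, (ih h.2).mono fun _ _ => List.mem_cons_of_mem _⟩

variable [Fintype V]

open Classical in
/-- A shortest walk from `s` to `t` without repeated vertices, or `[]` if `t` is unreachable. -/
noncomputable def shortestWalk (adj : V → V → Prop) (w : V → V → ℝ≥0∞) (s t : V) : List V :=
  if h : DReach adj s t then (exists_dWalk_nodup_wWeight_eq_ddist (w := w) h).choose else []

theorem shortestWalk_spec (h : DReach adj s t) :
    DWalk adj s (shortestWalk adj w s t) t ∧ (s :: shortestWalk adj w s t).Nodup ∧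
      wWeight w s (shortestWalk adj w s t) = ddist adj w s t := by
  rw [shortestWalk, dif_pos h]
  exact (exists_dWalk_nodup_wWeight_eq_ddist h).choose_spec

theorem adj_of_mem_walkEdges_shortestWalk {e : V × V}
    (he : e ∈ walkEdges s (shortestWalk adj w s t)) : adj e.1 e.2 := by
  by_cases h : DReach adj s t
  · exact (shortestWalk_spec h).1.adj_of_mem_walkEdges he
  · simp [shortestWalk, h, walkEdges] at he

noncomputable def outTree (adj : V → V → Prop) (w : V → V → ℝ≥0∞) (r : V) :
    Finset (V × V) :=
  (exists_outTree adj w r).choose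

noncomputable def inTree (adj : V → V → Prop) (w : V → V → ℝ≥0∞) (r : V) :
    Finset (V × V) :=
  (exists_inTree adj w r).choose

theorem outTree_spec (r : V) :
    (∀ e ∈ outTree adj w r, adj e.1 e.2) ∧ #(outTree adj w r) ≤ Fintype.card V ∧
      ∀ t, ddist adj w r t ≠ ⊤ → ∃ l, DWalk (fun a b => (a, b) ∈ outTree adj w r) r l t ∧
        wWeight w r l = ddist adj w r t :=
  (exists_outTree adj w r).choose_spec

theorem inTree_spec (r : V) :
    (∀ e ∈ inTree adj w r, adj e.1 e.2) ∧ #(inTree adj w r) ≤ Fintype.card V ∧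
      ∀ s, ddist adj w s r ≠ ⊤ → ∃ l, DWalk (fun a b => (a, b) ∈ inTree adj w r) s l r ∧
        wWeight w s l = ddist adj w s r :=
  (exists_inTree adj w r).choose_spec

variable [DecidableEq V] {P : Finset (V × V)} {L : ℕ} {R : Finset V}

noncomputable def preserver (adj : V → V → Prop) (w : V → V → ℝ≥0∞) (P : Finset (V × V))
    (L : ℕ) (R : Finset V) : Finset (V × V) :=
  (P.filter fun q => (shortestWalk adj w q.1 q.2).length ≤ L).biUnion
      (fun q => (walkEdges q.1 (shortestWalk adj w q.1 q.2)).toFinset) ∪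
    R.biUnion fun r => inTree adj w r ∪ outTree adj w r

theorem adj_of_mem_preserver {e : V × V} (he : e ∈ preserver adj w P L R) : adj e.1 e.2 := by
  simp only [preserver, mem_union, mem_biUnion, mem_filter, List.mem_toFinset] at he
  rcases he with ⟨q, -, he⟩ | ⟨r, -, he | he⟩
  · exact adj_of_mem_walkEdges_shortestWalk he
  · exact (inTree_spec r).1 e he
  · exact (outTree_spec r).1 e he

theorem card_preserver_le :
    #(preserver adj w P L R) ≤ #P * L + 2 * Fintype.card V * #R := by
  refine (card_union_le _ _).trans (add_le_add ?_ ?_)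
  · refine (card_biUnion_le_card_mul _ _ L fun q hq => ?_).trans
      (Nat.mul_le_mul_right _ (card_filter_le _ _))
    exact (List.toFinset_card_le _).trans (length_walkEdges.trans_le (mem_filter.1 hq).2)
  · rw [mul_comm]
    refine card_biUnion_le_card_mul _ _ _ fun r _ => (card_union_le _ _).trans ?_
    linarith [(inTree_spec (adj := adj) (w := w) r).2.1, (outTree_spec (adj := adj) (w := w) r).2.1]

theorem ddist_preserver_of_length_le {q : V × V} (hq : q ∈ P)
    (hL : (shortestWalk adj w q.1 q.2).length ≤ L) (ht : ddist adj w q.1 q.2 ≠ ⊤) :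
    ddist (fun a b => (a, b) ∈ preserver adj w P L R) w q.1 q.2 = ddist adj w q.1 q.2 := by
  obtain ⟨hwalk, -, hw⟩ := shortestWalk_spec (w := w) (dReach_of_ddist_ne_top ht)
  refine ddist_eq_of_dWalk (fun _ _ => adj_of_mem_preserver)
    (hwalk.restrict_walkEdges.mono ?_) hw.le
  intro a b hab
  exact mem_union_left _ (mem_biUnion.2 ⟨q, mem_filter.2 ⟨hq, hL⟩, List.mem_toFinset.2 hab⟩)

theorem ddist_preserver_of_mem (hv : v ∈ R) (hvst : v ∈ s :: shortestWalk adj w s t)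
    (ht : ddist adj w s t ≠ ⊤) :
    ddist (fun a b => (a, b) ∈ preserver adj w P L R) w s t = ddist adj w s t := by
  obtain ⟨hwalk, -, hw⟩ := shortestWalk_spec (w := w) (dReach_of_ddist_ne_top ht)
  have hsplit := hw ▸ ddist_add_ddist_le_of_mem (w := w) hwalk hvst
  obtain ⟨hsv, hvt⟩ := ENNReal.add_ne_top.1 (ne_top_of_le_ne_top ht hsplit)
  obtain ⟨l₁, h₁, hw₁⟩ := (inTree_spec v).2.2 s hsv
  obtain ⟨l₂, h₂, hw₂⟩ := (outTree_spec v).2.2 t hvt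
  have hsub : ∀ e ∈ inTree adj w v ∪ outTree adj w v, e ∈ preserver adj w P L R :=
    fun e he => mem_union_right _ (mem_biUnion.2 ⟨v, hv, he⟩)
  refine ddist_eq_of_dWalk (fun _ _ => adj_of_mem_preserver)
    ((h₁.mono fun _ _ he => hsub _ (mem_union_left _ he)).append
      (h₂.mono fun _ _ he => hsub _ (mem_union_right _ he))) ?_
  rwa [wWeight_append h₁, hw₁, hw₂]

end Preserver

section Sampling

open MeasureTheory Finset

theorem one_sub_pow_le_exp_inv {r : ℝ} {k : ℕ} (hr : r ≤ 1) (hk : 1 ≤ k * r) :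
    (1 - r) ^ k ≤ (Real.exp 1)⁻¹ :=
  calc (1 - r) ^ k ≤ Real.exp (-r) ^ k :=
        pow_le_pow_left₀ (sub_nonneg.2 hr) (by linarith [Real.add_one_le_exp (-r)]) k
    _ = Real.exp (-(k * r)) := by rw [← Real.exp_nat_mul]; ring_nf
    _ ≤ Real.exp (-1) := Real.exp_le_exp.2 (neg_le_neg hk)
    _ = (Real.exp 1)⁻¹ := Real.exp_neg 1

theorem integral_card_filter {Ω ι : Type*} [MeasurableSpace Ω] (μ : Measure Ω)
    [IsFiniteMeasure μ] (s : Finset ι) (p : Ω → ι → Prop) [∀ x i, Decidable (p x i)]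
    (hp : ∀ i ∈ s, MeasurableSet {x | p x i}) :
    ∫ x, (#(s.filter (p x)) : ℝ) ∂μ = ∑ i ∈ s, μ.real {x | p x i} := by
  have hind : ∀ x i, (if p x i then (1 : ℝ) else 0) = {x | p x i}.indicator 1 x :=
    fun x i => by by_cases h : p x i <;> simp [h]
  simp_rw [card_filter, Nat.cast_sum, Nat.cast_ite, Nat.cast_one, Nat.cast_zero, hind]
  rw [integral_finsetSum _ fun i hi => (integrable_const 1).indicator (hp i hi)]
  exact sum_congr rfl fun i hi => integral_indicator_one (hp i hi)

variable {V : Type} [Fintype V] {q : ℝ≥0∞} {hq : q ≤ 1}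

instance : IsProbabilityMeasure (bernoulliSample V q hq) := by
  unfold bernoulliSample; infer_instance

theorem bernoulliSample_pi_const (S : Finset V) (b : Bool) :
    bernoulliSample V q hq ((S : Set V).pi fun _ => {b}) = (cond b q (1 - q)) ^ #S := by
  rw [bernoulliSample, Measure.pi_pi_finset, prod_const]
  congr 1
  rw [PMF.toMeasure_apply_singleton _ _ (measurableSet_singleton _)]
  refine (PMF.bernoulli_apply _ _).trans ?_
  cases b <;> simp [ENNReal.coe_toNNReal (ne_top_of_le_ne_top ENNReal.one_ne_top hq)]

theorem bernoulliSample_apply_true (v : V) : bernoulliSample V q hq {f | f v = true} = q := by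
  simpa [Set.pi] using bernoulliSample_pi_const (hq := hq) {v} true

theorem bernoulliSample_forall_false (S : Finset V) :
    bernoulliSample V q hq {f | ∀ v ∈ S, f v = false} = (1 - q) ^ #S := by
  simpa [Set.pi] using bernoulliSample_pi_const (hq := hq) S false

theorem integral_card_sampled :
    ∫ f, (#(univ.filter fun v => f v = true) : ℝ) ∂(bernoulliSample V q hq) =
      Fintype.card V * q.toReal := by
  rw [integral_card_filter _ _ _ fun _ _ => MeasurableSet.of_discrete]
  simp [measureReal_def, bernoulliSample_apply_true]

theorem one_sub_exp_inv_le_bernoulliSample_exists {r : ℝ} (hr : 0 ≤ r)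
    (hq : ENNReal.ofReal r ≤ 1) (S : Finset V) (hS : 1 ≤ #S * r) :
    1 - (Real.exp 1)⁻¹ ≤
      (bernoulliSample V (ENNReal.ofReal r) hq).real {f | ∃ v ∈ S, f v = true} := by
  have hr1 : r ≤ 1 := ENNReal.ofReal_le_one.1 hq
  have hcompl : {f : V → Bool | ∃ v ∈ S, f v = true} = {f | ∀ v ∈ S, f v = false}ᶜ := by
    ext f; simp
  rw [hcompl, probReal_compl_eq_one_sub MeasurableSet.of_discrete, measureReal_def,
    bernoulliSample_forall_false, ← ENNReal.ofReal_one, ← ENNReal.ofReal_sub _ hr,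
    ← ENNReal.ofReal_pow (sub_nonneg.2 hr1), ENNReal.toReal_ofReal (by positivity)]
  linarith [one_sub_pow_le_exp_inv hr1 hS]

end Sampling

section Expectation

open MeasureTheory Finset

variable {V : Type} [Fintype V] [DecidableEq V] {adj : V → V → Prop} {w : V → V → ℝ≥0∞}
  {P : Finset (V × V)} {L : ℕ} {r : ℝ}

theorem one_sub_exp_inv_le_preserved (hr : 0 ≤ r) (hq : ENNReal.ofReal r ≤ 1)
    (hL : 1 ≤ (L + 1) * r) {q : V × V} (hqP : q ∈ P) :
    1 - (Real.exp 1)⁻¹ ≤ (bernoulliSample V (ENNReal.ofReal r) hq).real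
      {f | ddist (fun a b => (a, b) ∈ preserver adj w P L (univ.filter fun v => f v = true)) w
        q.1 q.2 = ddist adj w q.1 q.2} := by
  have hall : (∀ R, ddist (fun a b => (a, b) ∈ preserver adj w P L R) w q.1 q.2 =
      ddist adj w q.1 q.2) → 1 - (Real.exp 1)⁻¹ ≤ (bernoulliSample V (ENNReal.ofReal r) hq).real
        {f | ddist (fun a b => (a, b) ∈ preserver adj w P L (univ.filter fun v => f v = true)) w
          q.1 q.2 = ddist adj w q.1 q.2} := fun h => by
    simp [h, (Real.exp_pos 1).le]
  by_cases ht : ddist adj w q.1 q.2 = ⊤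
  · exact hall fun _ => ddist_eq_of_eq_top (fun _ _ => adj_of_mem_preserver) ht
  by_cases hshort : (shortestWalk adj w q.1 q.2).length ≤ L
  · exact hall fun _ => ddist_preserver_of_length_le hqP hshort ht
  set S := (q.1 :: shortestWalk adj w q.1 q.2).toFinset
  have hS : #S = (shortestWalk adj w q.1 q.2).length + 1 := by
    rw [List.toFinset_card_of_nodup (shortestWalk_spec (dReach_of_ddist_ne_top ht)).2.1,
      List.length_cons]
  refine (one_sub_exp_inv_le_bernoulliSample_exists hr hq S ?_).trans (measureReal_mono ?_)
  · refine hL.trans (mul_le_mul_of_nonneg_right ?_ hr)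
    rw [hS]
    exact_mod_cast Nat.succ_le_succ (not_le.1 hshort).le
  · rintro f ⟨v, hv, hfv⟩
    exact ddist_preserver_of_mem (mem_filter.2 ⟨mem_univ v, hfv⟩) (List.mem_toFinset.1 hv) ht

theorem one_sub_exp_inv_mul_card_le_integral_card_preserved (hr : 0 ≤ r)
    (hq : ENNReal.ofReal r ≤ 1) (hL : 1 ≤ (L + 1) * r) :
    (1 - (Real.exp 1)⁻¹) * #P ≤ ∫ f, (#(P.filter fun q =>
        ddist (fun a b => (a, b) ∈ preserver adj w P L (univ.filter fun v => f v = true)) w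
          q.1 q.2 = ddist adj w q.1 q.2) : ℝ) ∂(bernoulliSample V (ENNReal.ofReal r) hq) := by
  rw [integral_card_filter _ _ _ fun _ _ => MeasurableSet.of_discrete, mul_comm,
    ← nsmul_eq_mul, ← sum_const]
  exact sum_le_sum fun q hqP => one_sub_exp_inv_le_preserved hr hq hL hqP

theorem integral_card_preserver_le (hr : 0 ≤ r) (hq : ENNReal.ofReal r ≤ 1) :
    ∫ f, (#(preserver adj w P L (univ.filter fun v => f v = true)) : ℝ)
        ∂(bernoulliSample V (ENNReal.ofReal r) hq) ≤
      #P * L + 2 * Fintype.card V * (Fintype.card V * r) :=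
  calc _ ≤ ∫ f, (#P * L + 2 * Fintype.card V * #(univ.filter fun v => f v = true) : ℝ)
        ∂(bernoulliSample V (ENNReal.ofReal r) hq) :=
        integral_mono .of_finite .of_finite fun _ =>
          (Nat.cast_le.2 card_preserver_le).trans_eq (by push_cast; rfl)
    _ = _ := by
      rw [integral_add .of_finite .of_finite, integral_const, integral_const_mul,
        integral_card_sampled, ENNReal.toReal_ofReal hr]
      simp

end Expectation

open MeasureTheory in
/-- Distance preserver with slack (Coppersmith–Elkin simple construction): with
`ℓ = n/√p` and `R` a random node sample of rate `1/ℓ = √p/n`, there is a subgraph `H(R)`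
on at most `p·ℓ + 2n·|R|` edges — hence of expected size at most `3n·√p` — which exactly
preserves the distances of a subset `P'(R) ⊆ P` of expected size at least `(1 - 1/e)·p`. -/
theorem stmt5 {V : Type} [Fintype V]
    (E : Finset (V × V)) (w : V → V → ℝ≥0∞) (P : Finset (V × V))
    (hp1 : 1 ≤ P.card) (hpn : (P.card : ℝ) ≤ (Fintype.card V : ℝ) ^ 2) :
    ∃ (H : (V → Bool) → Finset (V × V)) (P' : (V → Bool) → Finset (V × V)),
      (∀ f, H f ⊆ E) ∧
      (∀ f, ((H f).card : ℝ) ≤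
          P.card * ((Fintype.card V : ℝ) / Real.sqrt P.card) +
          2 * Fintype.card V * (Finset.univ.filter (fun v => f v = true)).card) ∧
      (∀ f, P' f ⊆ P) ∧
      (∀ f, ∀ q ∈ P' f,
        ddist (fun a b => (a, b) ∈ H f) w q.1 q.2 =
          ddist (fun a b => (a, b) ∈ E) w q.1 q.2) ∧
      (1 - (Real.exp 1)⁻¹) * P.card ≤
        (∫ f, ((P' f).card : ℝ)
          ∂(bernoulliSample V (ENNReal.ofReal (Real.sqrt P.card / Fintype.card V))
            (by
              refine ENNReal.ofReal_le_one.mpr (div_le_one_of_le₀ ?_ (by positivity))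
              calc Real.sqrt P.card
                  ≤ Real.sqrt ((Fintype.card V : ℝ) ^ 2) := Real.sqrt_le_sqrt hpn
                _ = (Fintype.card V : ℝ) := Real.sqrt_sq (by positivity)))) ∧
      (∫ f, ((H f).card : ℝ)
          ∂(bernoulliSample V (ENNReal.ofReal (Real.sqrt P.card / Fintype.card V))
            (by
              refine ENNReal.ofReal_le_one.mpr (div_le_one_of_le₀ ?_ (by positivity))
              calc Real.sqrt P.card
                  ≤ Real.sqrt ((Fintype.card V : ℝ) ^ 2) := Real.sqrt_le_sqrt hpn
                _ = (Fintype.card V : ℝ) := Real.sqrt_sq (by positivity)))) ≤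
        3 * Fintype.card V * Real.sqrt P.card := by
  classical
  have hp : (0 : ℝ) < √P.card := Real.sqrt_pos.2 (by exact_mod_cast hp1)
  have hn : (0 : ℝ) < Fintype.card V := by
    have : (0 : ℝ) < (Fintype.card V : ℝ) ^ 2 := lt_of_lt_of_le (by exact_mod_cast hp1) hpn
    exact lt_of_le_of_ne (Nat.cast_nonneg _) fun h => by simp [← h] at this
  set L := ⌊(Fintype.card V : ℝ) / √P.card⌋₊
  have hL : (L : ℝ) ≤ Fintype.card V / √P.card := Nat.floor_le (by positivity)
  have hL1 : 1 ≤ (L + 1) * (√P.card / Fintype.card V) :=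
    calc (1 : ℝ) = Fintype.card V / √P.card * (√P.card / Fintype.card V) := by field_simp
      _ ≤ (L + 1) * (√P.card / Fintype.card V) := by
        gcongr; exact (Nat.lt_floor_add_one _).le
  let H (f : V → Bool) := preserver (fun a b => (a, b) ∈ E) w P L (Finset.univ.filter fun v => f v = true)
  refine ⟨H, fun f => P.filter fun q =>
      ddist (fun a b => (a, b) ∈ H f) w q.1 q.2 = ddist (fun a b => (a, b) ∈ E) w q.1 q.2,
    fun f e he => adj_of_mem_preserver he, fun f => ?_, fun f => Finset.filter_subset _ _,
    fun f q hq => (Finset.mem_filter.1 hq).2,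
    one_sub_exp_inv_mul_card_le_integral_card_preserved (by positivity) _ hL1,
    (integral_card_preserver_le (by positivity) _).trans ?_⟩
  · refine (Nat.cast_le.2 card_preserver_le).trans ?_
    push_cast
    gcongr
  · calc (P.card : ℝ) * L + 2 * Fintype.card V * (Fintype.card V * (√P.card / Fintype.card V))
        ≤ P.card * (Fintype.card V / √P.card) +
            2 * Fintype.card V * (Fintype.card V * (√P.card / Fintype.card V)) := by
          have := mul_le_mul_of_nonneg_left hL (Nat.cast_nonneg (α := ℝ) P.card)
          linarith
      _ = Fintype.card V * (P.card / √P.card) +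
            2 * Fintype.card V * √P.card * (Fintype.card V / Fintype.card V) := by ring
      _ = 3 * Fintype.card V * √P.card := by
        rw [Real.div_sqrt, div_self hn.ne']
        ring
end

section
/- Let G be an undirected unweighted graph, H a d-initialization of G, and π a shortest path in G that is missing x edges in H (i.e., x edges of π are not in H). Then the number of nodes of G that are adjacent in H to some node of π is at least x·d/6. -/
/-- `H` is a `d`-initialization of `G`: a subgraph obtained by choosing, for each node `v`,
`min d (deg_G v)` edges incident to `v` (in particular all incident edges when
`deg_G v ≤ d`), and taking the union of all chosen edges. -/
def IsDInit {V : Type} [Fintype V] [DecidableEq V] (G H : SimpleGraph V)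
    [DecidableRel G.Adj] [DecidableRel H.Adj] (d : ℕ) : Prop :=
  H ≤ G ∧ ∃ c : V → Finset (Sym2 V),
    (∀ v, c v ⊆ G.incidenceFinset v) ∧
    (∀ v, (c v).card = min d (G.degree v)) ∧
    H.edgeFinset = Finset.univ.biUnion c

/-!
On a shortest path from `s`, the distance from `s` strictly increases along the path, so a vertex
`y` is `G`-adjacent to at most three path vertices (those at distance `dist s y - 1`, `dist s y`,
`dist s y + 1`). Orient every missing edge along the path and keep its head: this gives `x`
distinct path vertices, each incident to an edge absent from `H`, hence of `H`-degree at least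
`d`. Double counting the `H`-edges between these heads and the `H`-neighbourhood `N` of the path
gives `x * d ≤ 3 * |N|`.
-/

open Finset SimpleGraph

theorem IsDInit.le_degree_of_notMem {V : Type} [Fintype V] [DecidableEq V] {G H : SimpleGraph V}
    [DecidableRel G.Adj] [DecidableRel H.Adj] {d : ℕ} (hH : IsDInit G H d) {e : Sym2 V} {v : V}
    (heG : e ∈ G.edgeSet) (heH : e ∉ H.edgeSet) (hv : v ∈ e) : d ≤ H.degree v := by
  obtain ⟨-, c, hsub, hcard, hH⟩ := hH
  have hcH : c v ⊆ H.incidenceFinset v := fun e' he' ↦ by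
    refine (H.mem_incidenceFinset v e').2 ⟨?_, ((G.mem_incidenceFinset v e').1 (hsub v he')).2⟩
    rw [← mem_edgeFinset, hH]
    exact mem_biUnion.2 ⟨v, mem_univ v, he'⟩
  by_cases hdeg : G.degree v ≤ d
  · have hc : c v = G.incidenceFinset v :=
      eq_of_subset_of_card_le (hsub v)
        (by rw [hcard, min_eq_right hdeg, card_incidenceFinset_eq_degree])
    have he : e ∈ c v := hc ▸ (G.mem_incidenceFinset v e).2 ⟨heG, hv⟩
    exact absurd ((H.mem_incidenceFinset v e).1 (hcH he)).1 heH
  · calc d = #(c v) := by rw [hcard, min_eq_left (by omega)]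
      _ ≤ #(H.incidenceFinset v) := card_le_card hcH
      _ = H.degree v := card_incidenceFinset_eq_degree H v

namespace SimpleGraph

variable {V : Type*} {G : SimpleGraph V}

namespace Walk

variable {u v w : V} {p : G.Walk u v}

theorem dist_eq_length_takeUntil [DecidableEq V] (hp : p.length = G.dist u v)
    (hw : w ∈ p.support) : G.dist u w = (p.takeUntil w hw).length :=
  (length_eq_dist_of_subwalk hp (p.isSubwalk_takeUntil hw)).symm

theorem injOn_dist_support (hp : p.length = G.dist u v) :
    Set.InjOn (G.dist u) {w | w ∈ p.support} := by
  classical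
  intro a ha b hb hab
  rw [← p.getVert_length_takeUntil ha, ← p.getVert_length_takeUntil hb,
    ← dist_eq_length_takeUntil hp, ← dist_eq_length_takeUntil hp, hab]

theorem card_filter_support_adj_le_three [DecidableEq V] [DecidableRel G.Adj]
    (hp : p.length = G.dist u v) (y : V) : #{w ∈ p.support.toFinset | G.Adj w y} ≤ 3 := by
  set S : Finset V := {w ∈ p.support.toFinset | G.Adj w y}
  have hmaps : Set.MapsTo (G.dist u) S (Icc (G.dist u y - 1) (G.dist u y + 1)) := fun w hw ↦ by
    have := (mem_filter.1 hw).2.diff_dist_adj (u := u)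
    simp only [coe_Icc, Set.mem_Icc]
    omega
  have hinj : Set.InjOn (G.dist u) S := fun a ha b hb ↦
    injOn_dist_support hp (List.mem_toFinset.1 (mem_filter.1 ha).1)
      (List.mem_toFinset.1 (mem_filter.1 hb).1)
  calc _ ≤ #(Icc (G.dist u y - 1) (G.dist u y + 1)) := card_le_card_of_injOn _ hmaps hinj
    _ ≤ 3 := by rw [Nat.card_Icc]; omega

theorem IsPath.injOn_dart_snd (hp : p.IsPath) : Set.InjOn (·.snd) {d | d ∈ p.darts} :=
  fun _ ha _ hb ↦ List.inj_on_of_nodup_map (p.map_snd_darts ▸ hp.support_nodup.tail) ha hb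

theorem IsPath.card_filter_edges_le [DecidableEq V] (hp : p.IsPath) (P : Sym2 V → Prop)
    [DecidablePred P] :
    #{e ∈ p.edges.toFinset | P e} ≤ #({d ∈ p.darts.toFinset | P d.edge}.image (·.snd)) := by
  set D := {d ∈ p.darts.toFinset | P d.edge}
  have hsub : {e ∈ p.edges.toFinset | P e} ⊆ D.image Dart.edge := fun e he ↦ by
    obtain ⟨he, hP⟩ := mem_filter.1 he
    obtain ⟨d, hd, rfl⟩ := List.mem_map.1 (List.mem_toFinset.1 he)
    exact mem_image_of_mem _ (mem_filter.2 ⟨List.mem_toFinset.2 hd, hP⟩)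
  rw [card_image_of_injOn fun a ha b hb ↦
    hp.injOn_dart_snd (List.mem_toFinset.1 (mem_filter.1 ha).1)
      (List.mem_toFinset.1 (mem_filter.1 hb).1)]
  exact (card_le_card hsub).trans card_image_le

end Walk

end SimpleGraph

/-- If `H` is a `d`-initialization of `G` and a shortest path `π` of `G` is missing `x`
edges in `H`, then at least `x·d/6` nodes are adjacent in `H` to some node of `π`. -/
theorem stmt8 {V : Type} [Fintype V] [DecidableEq V] (G H : SimpleGraph V)
    [DecidableRel G.Adj] [DecidableRel H.Adj] (d : ℕ) (hH : IsDInit G H d)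
    {s t : V} (π : G.Walk s t) (hshort : π.length = G.dist s t)
    (x : ℕ) (hx : x = (π.edges.toFinset \ H.edgeFinset).card) :
    ((x : ℝ) * d) / 6 ≤ ({y : V | ∃ v ∈ π.support, H.Adj y v}.ncard : ℝ) := by
  set F := {e ∈ π.darts.toFinset | e.edge ∉ H.edgeFinset}.image (·.snd)
  set N : Finset V := {y | ∃ v ∈ π.support, H.Adj y v}
  have hxF : x ≤ #F := by
    rw [hx, sdiff_eq_filter]
    exact (π.isPath_of_length_eq_dist hshort).card_filter_edges_le _
  have hF : ∀ v ∈ F, v ∈ π.support ∧ d ≤ H.degree v := fun v hv ↦ by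
    obtain ⟨e, he, rfl⟩ := mem_image.1 hv
    obtain ⟨he, heH⟩ := mem_filter.1 he
    exact ⟨π.dart_snd_mem_support_of_mem_darts (List.mem_toFinset.1 he),
      hH.le_degree_of_notMem e.edge_mem (mt mem_edgeFinset.2 heH) (Sym2.mem_mk_right _ _)⟩
  have hdeg : ∀ v ∈ F, d ≤ #(N.bipartiteAbove H.Adj v) := fun v hv ↦
    (hF v hv).2.trans <| card_le_card fun y hy ↦ by
      have hvy := (mem_neighborFinset H v y).1 hy
      exact mem_filter.2 ⟨mem_filter.2 ⟨mem_univ y, v, (hF v hv).1, hvy.symm⟩, hvy⟩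
  have hthree : ∀ y ∈ N, #(F.bipartiteBelow H.Adj y) ≤ 3 := fun y _ ↦
    (card_le_card fun v hv ↦ by
      obtain ⟨hvF, hvy⟩ := mem_filter.1 hv
      exact mem_filter.2 ⟨List.mem_toFinset.2 (hF v hvF).1, hH.1 hvy⟩).trans
    (π.card_filter_support_adj_le_three hshort y)
  have key : #F * d ≤ #N * 3 := card_mul_le_card_mul H.Adj hdeg hthree
  have hN : {y : V | ∃ v ∈ π.support, H.Adj y v}.ncard = #N := by
    rw [← Set.ncard_coe_finset, coe_filter]; simp
  rw [hN, div_le_iff₀ (by norm_num)]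
  have : (x : ℝ) * d ≤ #N * 3 := by exact_mod_cast (Nat.mul_le_mul_right d hxF).trans key
  linarith [(#N).cast_nonneg (α := ℝ)]
end

section
/- Let G be an undirected unweighted graph, H a subgraph of G, and suppose H contains a shortest path tree of G rooted at a node r, where r is adjacent in G to a node u lying on some shortest s⇝t path of G. Then dist_H(s,t) ≤ dist_G(s,t) + 2. -/
namespace SimpleGraph

variable {V : Type*} {G H : SimpleGraph V} {r u v s t : V}

theorem Walk.edist_add_edist_le_length (p : G.Walk s t) (hu : u ∈ p.support) :
    G.edist s u + G.edist u t ≤ p.length := by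
  classical
  calc G.edist s u + G.edist u t
      ≤ ((p.takeUntil u hu).length : ℕ∞) + (p.dropUntil u hu).length :=
        add_le_add (edist_le _) (edist_le _)
    _ = p.length := by
        rw [← Nat.cast_add, ← Walk.length_append, Walk.take_spec]

theorem edist_le_edist_add_one_of_adj (hru : G.Adj r u) :
    G.edist r v ≤ G.edist u v + 1 :=
  calc G.edist r v ≤ G.edist r u + G.edist u v := SimpleGraph.edist_triangle
    _ = G.edist u v + 1 := by rw [edist_eq_one_iff_adj.mpr hru, add_comm]

theorem edist_le_edist_add_edist_of_forall_edist_eq (hSPT : ∀ v, H.edist r v = G.edist r v) :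
    H.edist s t ≤ G.edist r s + G.edist r t :=
  calc H.edist s t ≤ H.edist s r + H.edist r t := SimpleGraph.edist_triangle
    _ = G.edist r s + G.edist r t := by rw [edist_comm, hSPT, hSPT]

end SimpleGraph

open SimpleGraph in
theorem stmt9_general {V : Type} (G H : SimpleGraph V) (r u s t : V)
    (hSPT : ∀ v : V, H.edist r v = G.edist r v)
    (hru : G.Adj r u)
    (hpath : ∃ p : G.Walk s t, (p.length : ℕ∞) = G.edist s t ∧ u ∈ p.support) :
    H.edist s t ≤ G.edist s t + 2 := by
  obtain ⟨p, hp, hu⟩ := hpath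
  calc H.edist s t ≤ G.edist r s + G.edist r t := edist_le_edist_add_edist_of_forall_edist_eq hSPT
    _ ≤ (G.edist u s + 1) + (G.edist u t + 1) :=
        add_le_add (edist_le_edist_add_one_of_adj hru) (edist_le_edist_add_one_of_adj hru)
    _ = (G.edist s u + G.edist u t) + 2 := by rw [edist_comm (u := u)]; ring
    _ ≤ G.edist s t + 2 := by
        gcongr
        exact hp ▸ p.edist_add_edist_le_length hu

/-- The +2 stretch argument: if the subgraph `H ≤ G` contains a shortest path tree of `G`
rooted at `r` (so `H` realizes all `G`-distances from `r`), and `r` is adjacent in `G` to a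
node `u` lying on some shortest `s⇝t` path of `G`, then `dist_H(s,t) ≤ dist_G(s,t) + 2`.
Distances are `ℕ∞`-valued (`⊤` for unreachable pairs). -/
theorem stmt9 {V : Type} (G H : SimpleGraph V) (hle : H ≤ G) (r u s t : V)
    (hSPT : ∀ v : V, H.edist r v = G.edist r v)
    (hru : G.Adj r u)
    (hpath : ∃ p : G.Walk s t, (p.length : ℕ∞) = G.edist s t ∧ u ∈ p.support) :
    H.edist s t ≤ G.edist s t + 2 :=
  stmt9_general G H r u s t hSPT hru hpath
end

section
/- Let G be an undirected unweighted graph and H a subgraph. Suppose x, x' lie on a shortest s⇝t path with dist_H(s,x) = dist_G(s,x) and dist_H(x',t) = dist_G(x',t), and suppose there exist nodes u, u' with dist_G(u,u') ≤ dist_G(x,x'), dist_H(u,u') = dist_G(u,u'), and edges in H giving dist_H(x,u) ≤ 2 and dist_H(u',x') ≤ 2 — more precisely dist_H(x,x') ≤ dist_H(u,u') + 4. Then dist_H(s,t) ≤ dist_G(s,t) + 4. -/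
/-!
Concatenate a shortest `H`-path `s ⇝ x`, any shortest `H`-path `x ⇝ x'` and a shortest `H`-path
`x' ⇝ t`. The outer pieces have their `G`-lengths, and the middle one has length at most
`dist_H(u,u') + 4 = dist_G(u,u') + 4 ≤ dist_G(x,x') + 4`. Since `x, x'` lie in this order on a
shortest `s ⇝ t` path, the three `G`-distances add up to `dist_G(s,t)`.
-/

namespace SimpleGraph.Walk

variable {V : Type} {G : SimpleGraph V} [DecidableEq V]

theorem length_takeUntil_add_length_dropUntil {s t x : V} (p : G.Walk s t) (hx : x ∈ p.support) :
    (p.takeUntil x hx).length + (p.dropUntil x hx).length = p.length := by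
  conv_rhs => rw [← p.take_spec hx]
  rw [length_append]

theorem edist_add_edist_le_length_s11 {s t x : V} (p : G.Walk s t) (hx : x ∈ p.support) :
    G.edist s x + G.edist x t ≤ p.length := by
  rw [← p.length_takeUntil_add_length_dropUntil hx, Nat.cast_add]
  exact add_le_add (p.takeUntil x hx).edist_le (p.dropUntil x hx).edist_le

theorem edist_add_edist_add_edist_le_length {s t x x' : V} (p : G.Walk s t)
    (hx : x ∈ p.support) (hx' : x' ∈ (p.dropUntil x hx).support) :
    G.edist s x + G.edist x x' + G.edist x' t ≤ p.length := by
  calc G.edist s x + G.edist x x' + G.edist x' t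
      ≤ (p.takeUntil x hx).length + (p.dropUntil x hx).length := by
        rw [add_assoc]
        exact add_le_add (p.takeUntil x hx).edist_le
          ((p.dropUntil x hx).edist_add_edist_le_length_s11 hx')
    _ = p.length := mod_cast p.length_takeUntil_add_length_dropUntil hx

end SimpleGraph.Walk

theorem SimpleGraph.edist_le_edist_add_edist_add_edist {V : Type} (G : SimpleGraph V)
    (s x x' t : V) : G.edist s t ≤ G.edist s x + G.edist x x' + G.edist x' t :=
  G.edist_triangle.trans (add_le_add_left G.edist_triangle _)

theorem stmt11_general {V : Type} [DecidableEq V] (G H : SimpleGraph V)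
    (s t x x' u u' : V)
    (p : G.Walk s t) (hshort : (p.length : ℕ∞) = G.edist s t)
    (hx : x ∈ p.support) (hx' : x' ∈ (p.dropUntil x hx).support)
    (hpre : H.edist s x = G.edist s x) (hsuf : H.edist x' t = G.edist x' t)
    (hmin : G.edist u u' ≤ G.edist x x')
    (huu' : H.edist u u' = G.edist u u')
    (hxx' : H.edist x x' ≤ H.edist u u' + 4) :
    H.edist s t ≤ G.edist s t + 4 := by
  have hmiddle : H.edist x x' ≤ G.edist x x' + 4 :=
    hxx'.trans (huu' ▸ add_le_add_left hmin 4)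
  calc H.edist s t ≤ H.edist s x + H.edist x x' + H.edist x' t :=
        H.edist_le_edist_add_edist_add_edist s x x' t
    _ ≤ G.edist s x + (G.edist x x' + 4) + G.edist x' t := by
        rw [hpre, hsuf]; gcongr
    _ = G.edist s x + G.edist x x' + G.edist x' t + 4 := by ring
    _ ≤ G.edist s t + 4 := by
        gcongr
        exact hshort ▸ p.edist_add_edist_add_edist_le_length hx hx'

/-- The +4 stretch argument (medium-pair case of the +4 pairwise spanner): `x, x'` lie (in
order) on a shortest `s⇝t` path of `G`; the subgraph `H ≤ G` realizes the `G`-distances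
`s⇝x` and `x'⇝t`; and there exist nodes `u, u'` with `dist_G(u,u') ≤ dist_G(x,x')`,
`dist_H(u,u') = dist_G(u,u')`, and `dist_H(x,x') ≤ dist_H(u,u') + 4`.  Then
`dist_H(s,t) ≤ dist_G(s,t) + 4`.  Distances are `ℕ∞`-valued. -/
theorem stmt11 {V : Type} [DecidableEq V] (G H : SimpleGraph V) (hle : H ≤ G)
    (s t x x' u u' : V)
    (p : G.Walk s t) (hshort : (p.length : ℕ∞) = G.edist s t)
    (hx : x ∈ p.support) (hx' : x' ∈ (p.dropUntil x hx).support)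
    (hpre : H.edist s x = G.edist s x) (hsuf : H.edist x' t = G.edist x' t)
    (hmin : G.edist u u' ≤ G.edist x x')
    (huu' : H.edist u u' = G.edist u u')
    (hxx' : H.edist x x' ≤ H.edist u u' + 4) :
    H.edist s t ≤ G.edist s t + 4 :=
  stmt11_general G H s t x x' u u' p hshort hx hx' hpre hsuf hmin huu' hxx'
end
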